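/- Deterministic lower bound on the CUSUM gap between the change point and another split (key step of the proof of Theorem 2). Suppose μ ∈ ℝ^N has a single change at τ on [s,e] with κ = |α − β|, let ε ∈ ℝ^N, and set Y = μ + ε. Fix τ ≤ b < e, let Q = S^w_{s:τ}·S^w_{(τ+1):b}/S^w_{s:b}, and let v = ψ_{s,e}^{τ}·⟨ψ_{s,e}^{τ}, μ⟩_w − ψ_{s,e}^{b}·⟨ψ_{s,e}^{b}, μ⟩_w. If |⟨ε, ψ_{s,e}^{b}⟩_w| ≤ r and |⟨v, ε⟩_w| ≤ r·‖v‖_w, then (W_{s,e}^{Y}(τ))² − (W_{s,e}^{Y}(b))² ≥ Q·κ² − r² − 2·r·κ·sqrt(Q). -/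
import Mathlib


open MeasureTheory ProbabilityTheory

/-- Cumulative weight `S^w_{u:v} = Σ_{i=u}^{v} w_i`. -/
noncomputable def Sw (w : ℕ → ℝ) (u v : ℕ) : ℝ := ∑ i ∈ Finset.Icc u v, w i

/-- Weighted inner product `⟨x,y⟩_w = Σ_{i=1}^{N} w_i x_i y_i`. -/
noncomputable def winner (N : ℕ) (w x y : ℕ → ℝ) : ℝ :=
  ∑ i ∈ Finset.Icc 1 N, w i * x i * y i

/-- Weighted norm `‖x‖_w = ⟨x,x⟩_w^{1/2}`. -/
noncomputable def wnorm (N : ℕ) (w x : ℕ → ℝ) : ℝ := Real.sqrt (winner N w x x)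

/-- Weighted CUSUM statistic `W_{s,e}^{v}(b)`. -/
noncomputable def wCUSUM (w v : ℕ → ℝ) (s e b : ℕ) : ℝ :=
  Real.sqrt (Sw w s b * Sw w (b + 1) e / Sw w s e) *
    |(Sw w s b)⁻¹ * ∑ i ∈ Finset.Icc s b, w i * v i
      - (Sw w (b + 1) e)⁻¹ * ∑ i ∈ Finset.Icc (b + 1) e, w i * v i|

/-- The CUSUM contrast vector `ψ_{s,e}^{b}`. -/
noncomputable def psiContrast (w : ℕ → ℝ) (s e b : ℕ) (i : ℕ) : ℝ :=
  if s ≤ i ∧ i ≤ b then Real.sqrt (Sw w (b + 1) e / (Sw w s b * Sw w s e))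
  else if b < i ∧ i ≤ e then -Real.sqrt (Sw w s b / (Sw w s e * Sw w (b + 1) e))
  else 0

lemma sum_Icc_split (f : ℕ → ℝ) {u m v : ℕ} (h1 : u ≤ m + 1) (h2 : m ≤ v) :
    ∑ i ∈ Finset.Icc u v, f i = ∑ i ∈ Finset.Icc u m, f i + ∑ i ∈ Finset.Icc (m+1) v, f i := by
  rw [← Finset.sum_union]
  · apply Finset.sum_congr _ (fun _ _ => rfl)
    ext i
    simp only [Finset.mem_Icc, Finset.mem_union]
    omega
  · rw [Finset.disjoint_left]
    intro a ha hb
    simp only [Finset.mem_Icc] at ha hb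
    omega
lemma Sw_pos (w : ℕ → ℝ) (hw : ∀ i, 0 < w i) {u v : ℕ} (h : u ≤ v) : 0 < Sw w u v :=
  Finset.sum_pos (fun i _ => hw i) (by simp [Finset.nonempty_Icc, h])
lemma Sw_nonneg (w : ℕ → ℝ) (hw : ∀ i, 0 < w i) (u v : ℕ) : 0 ≤ Sw w u v :=
  Finset.sum_nonneg (fun i _ => (hw i).le)
lemma Sw_split (w : ℕ → ℝ) {u m v : ℕ} (h1 : u ≤ m + 1) (h2 : m ≤ v) :
    Sw w u v = Sw w u m + Sw w (m+1) v := sum_Icc_split w h1 h2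
lemma winner_comm (N : ℕ) (w x y : ℕ → ℝ) : winner N w x y = winner N w y x :=
  Finset.sum_congr rfl (fun i _ => by ring)
lemma winner_add_left (N : ℕ) (w x y z t : ℕ → ℝ) (h : ∀ i, z i = x i + y i) :
    winner N w z t = winner N w x t + winner N w y t := by
  unfold winner
  rw [← Finset.sum_add_distrib]
  exact Finset.sum_congr rfl (fun i _ => by rw [h]; ring)
lemma winner_sub_smul (N : ℕ) (w x y t v : ℕ → ℝ) (a c : ℝ)
    (h : ∀ i, v i = a * x i - c * y i) :
    winner N w v t = a * winner N w x t - c * winner N w y t := by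
  unfold winner
  rw [Finset.mul_sum, Finset.mul_sum, ← Finset.sum_sub_distrib]
  exact Finset.sum_congr rfl (fun i _ => by rw [h]; ring)
lemma sqrt_mul_sqrt_eq {x y z : ℝ} (hx : 0 ≤ x) (hz : 0 ≤ z) (h : x * y = z^2) :
    Real.sqrt x * Real.sqrt y = z := by
  rw [← Real.sqrt_mul hx, h, Real.sqrt_sq hz]
lemma mul_sqrt_eq {a x y : ℝ} (ha : 0 ≤ a) (h : a^2 * x = y) :
    a * Real.sqrt x = Real.sqrt y := by
  rw [← h, Real.sqrt_mul (by positivity), Real.sqrt_sq ha]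
lemma winner_psi (N : ℕ) (w x : ℕ → ℝ) (s e b : ℕ)
    (hs : 1 ≤ s) (hsb : s ≤ b) (hbe : b < e) (heN : e ≤ N) :
    winner N w x (psiContrast w s e b)
      = (∑ i ∈ Finset.Icc s b, w i * x i) * Real.sqrt (Sw w (b+1) e / (Sw w s b * Sw w s e))
        - (∑ i ∈ Finset.Icc (b+1) e, w i * x i) * Real.sqrt (Sw w s b / (Sw w s e * Sw w (b+1) e)) := by
  unfold winner
  rw [← Finset.sum_subset (Finset.Icc_subset_Icc hs heN)
    (fun i _ hi => by
      simp only [Finset.mem_Icc, not_and, not_le] at hi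
      unfold psiContrast
      rw [if_neg (by omega), if_neg (by omega)]
      ring)]
  rw [sum_Icc_split _ (by omega) (by omega : b ≤ e)]
  congr 1
  · rw [Finset.sum_mul]
    refine Finset.sum_congr rfl (fun i hi => ?_)
    simp only [Finset.mem_Icc] at hi
    unfold psiContrast
    rw [if_pos ⟨hi.1, hi.2⟩]
  · rw [Finset.sum_mul, ← Finset.sum_neg_distrib]
    refine Finset.sum_congr rfl (fun i hi => ?_)
    simp only [Finset.mem_Icc] at hi
    unfold psiContrast
    rw [if_neg (by omega), if_pos ⟨by omega, hi.2⟩]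
    ring
lemma sum_w_const (w μ : ℕ → ℝ) (c : ℝ) (u v : ℕ) (h : ∀ i, u ≤ i → i ≤ v → μ i = c) :
    ∑ i ∈ Finset.Icc u v, w i * μ i = Sw w u v * c := by
  rw [Sw, Finset.sum_mul]
  refine Finset.sum_congr rfl fun i hi => ?_
  simp only [Finset.mem_Icc] at hi
  rw [h i hi.1 hi.2]
lemma sum_w_psi_pos (w : ℕ → ℝ) (s e b u v : ℕ) (hsu : s ≤ u) (hvb : v ≤ b) :
    ∑ i ∈ Finset.Icc u v, w i * psiContrast w s e b i
      = Sw w u v * Real.sqrt (Sw w (b+1) e / (Sw w s b * Sw w s e)) := by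
  rw [Sw, Finset.sum_mul]
  refine Finset.sum_congr rfl fun i hi => ?_
  simp only [Finset.mem_Icc] at hi
  unfold psiContrast
  rw [if_pos ⟨by omega, by omega⟩]
lemma sum_w_psi_neg (w : ℕ → ℝ) (s e b u v : ℕ) (hbu : b < u) (hve : v ≤ e) :
    ∑ i ∈ Finset.Icc u v, w i * psiContrast w s e b i
      = -(Sw w u v * Real.sqrt (Sw w s b / (Sw w s e * Sw w (b+1) e))) := by
  rw [Sw, Finset.sum_mul, ← Finset.sum_neg_distrib]
  refine Finset.sum_congr rfl fun i hi => ?_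
  simp only [Finset.mem_Icc] at hi
  unfold psiContrast
  rw [if_neg (by omega), if_pos ⟨by omega, by omega⟩]
  ring
lemma wCUSUM_sq (N : ℕ) (w Y : ℕ → ℝ) (hw : ∀ i, 0 < w i) (s e b : ℕ)
    (hs : 1 ≤ s) (hsb : s ≤ b) (hbe : b < e) (heN : e ≤ N) :
    (wCUSUM w Y s e b)^2 = (winner N w Y (psiContrast w s e b))^2 := by
  have hA : 0 < Sw w s b := Sw_pos w hw hsb
  have hB : 0 < Sw w (b+1) e := Sw_pos w hw (by omega)
  have hT : 0 < Sw w s e := Sw_pos w hw (by omega)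
  rw [winner_psi N w Y s e b hs hsb hbe heN]
  unfold wCUSUM
  set S1 := ∑ i ∈ Finset.Icc s b, w i * Y i
  set S2 := ∑ i ∈ Finset.Icc (b+1) e, w i * Y i
  set A := Sw w s b
  set B := Sw w (b+1) e
  set T := Sw w s e
  have h1 : (Real.sqrt (B / (A * T)))^2 = B/(A*T) := Real.sq_sqrt (by positivity)
  have h2 : (Real.sqrt (A / (T * B)))^2 = A/(T*B) := Real.sq_sqrt (by positivity)
  have h3 : Real.sqrt (B/(A*T)) * Real.sqrt (A/(T*B)) = 1/T :=
    sqrt_mul_sqrt_eq (by positivity) (by positivity) (by field_simp)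
  rw [mul_pow, sq_abs, Real.sq_sqrt (by positivity)]
  rw [show (S1 * Real.sqrt (B/(A*T)) - S2 * Real.sqrt (A/(T*B)))^2
      = S1^2 * (Real.sqrt (B/(A*T)))^2
        - 2*S1*S2*(Real.sqrt (B/(A*T)) * Real.sqrt (A/(T*B)))
        + S2^2 * (Real.sqrt (A/(T*B)))^2 from by ring]
  rw [h1, h2, h3]
  field_simp
  ring
lemma winner_psi_self (N : ℕ) (w : ℕ → ℝ) (hw : ∀ i, 0 < w i) (s e b : ℕ)
    (hs : 1 ≤ s) (hsb : s ≤ b) (hbe : b < e) (heN : e ≤ N) :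
    winner N w (psiContrast w s e b) (psiContrast w s e b) = 1 := by
  have hA : 0 < Sw w s b := Sw_pos w hw hsb
  have hB : 0 < Sw w (b+1) e := Sw_pos w hw (by omega)
  have hT : 0 < Sw w s e := Sw_pos w hw (by omega)
  have hsplit : Sw w s e = Sw w s b + Sw w (b+1) e := Sw_split w (by omega) (by omega)
  rw [winner_psi N w _ s e b hs hsb hbe heN,
      sum_w_psi_pos w s e b s b le_rfl le_rfl,
      sum_w_psi_neg w s e b (b+1) e (by omega) le_rfl]
  set A := Sw w s b
  set B := Sw w (b+1) e
  set T := Sw w s e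
  have h1 : (Real.sqrt (B / (A * T)))^2 = B/(A*T) := Real.sq_sqrt (by positivity)
  have h2 : (Real.sqrt (A / (T * B)))^2 = A/(T*B) := Real.sq_sqrt (by positivity)
  rw [show A * Real.sqrt (B/(A*T)) * Real.sqrt (B/(A*T))
        - -(B * Real.sqrt (A/(T*B))) * Real.sqrt (A/(T*B))
      = A * (Real.sqrt (B/(A*T)))^2 + B * (Real.sqrt (A/(T*B)))^2 from by ring]
  rw [h1, h2]
  rw [hsplit]
  field_simp
  ring

/-- **Deterministic lower bound on the CUSUM gap between the change point and
another split (key step of the proof of Theorem 2).** Suppose `μ` has a single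
change at `τ` on `[s,e]` with `κ = |α - β|`, `Y = μ + ε`, `τ ≤ b < e`,
`Q = S^w_{s:τ}·S^w_{(τ+1):b}/S^w_{s:b}`, and
`v = ψ^{τ}⟨ψ^{τ},μ⟩_w − ψ^{b}⟨ψ^{b},μ⟩_w`. If `|⟨ε,ψ^{b}⟩_w| ≤ r` and
`|⟨v,ε⟩_w| ≤ r·‖v‖_w`, then
`(W_{s,e}^{Y}(τ))² − (W_{s,e}^{Y}(b))² ≥ Q·κ² − r² − 2rκ·sqrt(Q)`. -/
theorem cusum_gap_lower_bound
    (N : ℕ) (w : ℕ → ℝ) (hw : ∀ i, 0 < w i)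
    (μvec : ℕ → ℝ) (s e τ : ℕ)
    (hs : 1 ≤ s) (hsτ : s ≤ τ) (hτe : τ < e) (heN : e ≤ N)
    (α β : ℝ)
    (hα : ∀ i, s ≤ i → i ≤ τ → μvec i = α)
    (hβ : ∀ i, τ < i → i ≤ e → μvec i = β)
    (ε Y : ℕ → ℝ) (hY : ∀ i, Y i = μvec i + ε i)
    (b : ℕ) (hτb : τ ≤ b) (hbe : b < e)
    (Q : ℝ) (hQ : Q = Sw w s τ * Sw w (τ + 1) b / Sw w s b)
    (v : ℕ → ℝ)
    (hv : ∀ i, v i = psiContrast w s e τ i * winner N w (psiContrast w s e τ) μvec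
      - psiContrast w s e b i * winner N w (psiContrast w s e b) μvec)
    (r : ℝ)
    (hεb : |winner N w ε (psiContrast w s e b)| ≤ r)
    (hvε : |winner N w v ε| ≤ r * wnorm N w v) :
    (wCUSUM w Y s e τ) ^ 2 - (wCUSUM w Y s e b) ^ 2
      ≥ Q * |α - β| ^ 2 - r ^ 2 - 2 * r * |α - β| * Real.sqrt Q := by
  have hsb : s ≤ b := hsτ.trans hτb
  have hP : 0 < Sw w s τ := Sw_pos w hw hsτ
  have hA : 0 < Sw w s b := Sw_pos w hw hsb
  have hB : 0 < Sw w (b+1) e := Sw_pos w hw (by omega)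
  have hBτ : 0 < Sw w (τ+1) e := Sw_pos w hw (by omega)
  have hT : 0 < Sw w s e := Sw_pos w hw (by omega)
  have hR : 0 ≤ Sw w (τ+1) b := Sw_nonneg w hw _ _
  have hA1 : Sw w s b = Sw w s τ + Sw w (τ+1) b := Sw_split w (by omega) hτb
  have hBτ1 : Sw w (τ+1) e = Sw w (τ+1) b + Sw w (b+1) e := Sw_split w (by omega) hbe.le
  have hT1 : Sw w s e = Sw w s τ + Sw w (τ+1) e := Sw_split w (by omega) (by omega)
  set pτ := Real.sqrt (Sw w (τ+1) e / (Sw w s τ * Sw w s e)) with hpτdef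
  set qτ := Real.sqrt (Sw w s τ / (Sw w s e * Sw w (τ+1) e)) with hqτdef
  set pb := Real.sqrt (Sw w (b+1) e / (Sw w s b * Sw w s e)) with hpbdef
  set qb := Real.sqrt (Sw w s b / (Sw w s e * Sw w (b+1) e)) with hqbdef
  have hpτ2 : pτ^2 = Sw w (τ+1) e / (Sw w s τ * Sw w s e) := by
    rw [hpτdef]; exact Real.sq_sqrt (by positivity)
  have hqτ2 : qτ^2 = Sw w s τ / (Sw w s e * Sw w (τ+1) e) := by
    rw [hqτdef]; exact Real.sq_sqrt (by positivity)
  have hpb2 : pb^2 = Sw w (b+1) e / (Sw w s b * Sw w s e) := by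
    rw [hpbdef]; exact Real.sq_sqrt (by positivity)
  have hPpτ : Sw w s τ * pτ = Sw w (τ+1) e * qτ := by
    rw [hpτdef, hqτdef,
      mul_sqrt_eq hP.le (show (Sw w s τ)^2 * (Sw w (τ+1) e/(Sw w s τ * Sw w s e))
        = Sw w s τ * Sw w (τ+1) e / Sw w s e by field_simp),
      mul_sqrt_eq hBτ.le (show (Sw w (τ+1) e)^2 * (Sw w s τ/(Sw w s e * Sw w (τ+1) e))
        = Sw w s τ * Sw w (τ+1) e / Sw w s e by field_simp)]
  have hApb : Sw w s b * pb = Sw w (b+1) e * qb := by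
    rw [hpbdef, hqbdef,
      mul_sqrt_eq hA.le (show (Sw w s b)^2 * (Sw w (b+1) e/(Sw w s b * Sw w s e))
        = Sw w s b * Sw w (b+1) e / Sw w s e by field_simp),
      mul_sqrt_eq hB.le (show (Sw w (b+1) e)^2 * (Sw w s b/(Sw w s e * Sw w (b+1) e))
        = Sw w s b * Sw w (b+1) e / Sw w s e by field_simp)]
  have e6 : Sw w s τ * Sw w s e * pτ^2 = Sw w (τ+1) e := by rw [hpτ2]; field_simp
  have e7 : Sw w s e * Sw w (τ+1) e * qτ^2 = Sw w s τ := by rw [hqτ2]; field_simp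
  have e8 : Sw w s b * Sw w s e * pb^2 = Sw w (b+1) e := by rw [hpb2]; field_simp
  -- inner products with μ
  have hA0 : winner N w μvec (psiContrast w s e τ) = Sw w s τ * pτ * (α - β) := by
    rw [winner_psi N w μvec s e τ hs hsτ hτe heN,
        sum_w_const w μvec α s τ hα,
        sum_w_const w μvec β (τ+1) e (fun i h1 h2 => hβ i (by omega) h2),
        ← hpτdef, ← hqτdef]
    linear_combination β * hPpτ
  have hB0 : winner N w μvec (psiContrast w s e b) = Sw w s τ * pb * (α - β) := by
    rw [winner_psi N w μvec s e b hs hsb hbe heN,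
        sum_Icc_split (fun i => w i * μvec i) (show s ≤ τ+1 by omega) hτb,
        sum_w_const w μvec α s τ hα,
        sum_w_const w μvec β (τ+1) b (fun i h1 h2 => hβ i (by omega) (by omega)),
        sum_w_const w μvec β (b+1) e (fun i h1 h2 => hβ i (by omega) h2),
        ← hpbdef, ← hqbdef]
    linear_combination β * hApb - β * pb * hA1
  have hc : winner N w (psiContrast w s e τ) (psiContrast w s e b)
      = (Sw w s τ * pτ - Sw w (τ+1) b * qτ) * pb + Sw w (b+1) e * qτ * qb := by
    rw [winner_psi N w _ s e b hs hsb hbe heN,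
        sum_Icc_split (fun i => w i * psiContrast w s e τ i) (show s ≤ τ+1 by omega) hτb,
        sum_w_psi_pos w s e τ s τ le_rfl le_rfl,
        sum_w_psi_neg w s e τ (τ+1) b (by omega) (by omega),
        sum_w_psi_neg w s e τ (b+1) e (by omega) le_rfl,
        ← hpτdef, ← hqτdef, ← hpbdef, ← hqbdef]
    ring
  have hstep : pτ * ((Sw w s τ * pτ - Sw w (τ+1) b * qτ) * pb + Sw w (b+1) e * qτ * qb)
      = pb := by
    apply mul_left_cancel₀ hT.ne'
    linear_combination pb * e6 + pb * e7 - pb * hT1 + Sw w s e * qτ * pb * hPpτ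
      + Sw w s e * pτ * qτ * pb * hA1 - Sw w s e * pτ * qτ * hApb
  have hkey : winner N w μvec (psiContrast w s e τ)
        * winner N w (psiContrast w s e τ) (psiContrast w s e b)
      = winner N w μvec (psiContrast w s e b) := by
    rw [hA0, hB0, hc]
    linear_combination (Sw w s τ * (α - β)) * hstep
  have hττ : winner N w (psiContrast w s e τ) (psiContrast w s e τ) = 1 :=
    winner_psi_self N w hw s e τ hs hsτ hτe heN
  have hbb : winner N w (psiContrast w s e b) (psiContrast w s e b) = 1 :=
    winner_psi_self N w hw s e b hs hsb hbe heN
  have hv' : ∀ i, v i = winner N w μvec (psiContrast w s e τ) * psiContrast w s e τ i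
      - winner N w μvec (psiContrast w s e b) * psiContrast w s e b i := fun i => by
    rw [hv i, winner_comm N w (psiContrast w s e τ) μvec,
        winner_comm N w (psiContrast w s e b) μvec]
    ring
  have hvv : winner N w v v = (winner N w μvec (psiContrast w s e τ))^2
      - (winner N w μvec (psiContrast w s e b))^2 := by
    have h1 := winner_sub_smul N w (psiContrast w s e τ) (psiContrast w s e b) v v _ _ hv'
    have h2 := winner_sub_smul N w (psiContrast w s e τ) (psiContrast w s e b)
      (psiContrast w s e τ) v _ _ hv'
    have h3 := winner_sub_smul N w (psiContrast w s e τ) (psiContrast w s e b)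
      (psiContrast w s e b) v _ _ hv'
    rw [h1, winner_comm N w (psiContrast w s e τ) v, winner_comm N w (psiContrast w s e b) v,
        h2, h3, hττ, hbb, winner_comm N w (psiContrast w s e b) (psiContrast w s e τ)]
    linear_combination (-2 * winner N w μvec (psiContrast w s e b)) * hkey
  -- A0² - B0² = Q κ²
  have h1sq : (Sw w s τ * pτ * (α-β))^2
      = Sw w s τ * Sw w (τ+1) e / Sw w s e * (α-β)^2 := by
    rw [mul_pow, mul_pow, hpτ2]; field_simp
  have h2sq : (Sw w s τ * pb * (α-β))^2
      = (Sw w s τ)^2 * Sw w (b+1) e / (Sw w s b * Sw w s e) * (α-β)^2 := by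
    rw [mul_pow, mul_pow, hpb2]; field_simp
  have hT1' : Sw w s e = Sw w s τ + (Sw w (τ+1) b + Sw w (b+1) e) := by
    rw [hT1, hBτ1]
  have hPR : (0:ℝ) < Sw w s τ + Sw w (τ+1) b := by linarith
  have hPRB : (0:ℝ) < Sw w s τ + (Sw w (τ+1) b + Sw w (b+1) e) := by linarith
  have hrat : Sw w s τ * Sw w (τ+1) e / Sw w s e * (α-β)^2
      - (Sw w s τ)^2 * Sw w (b+1) e / (Sw w s b * Sw w s e) * (α-β)^2
      = Sw w s τ * Sw w (τ+1) b / Sw w s b * (α-β)^2 := by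
    rw [hT1', hBτ1, hA1]
    field_simp
    ring
  have hAB : (winner N w μvec (psiContrast w s e τ))^2
      - (winner N w μvec (psiContrast w s e b))^2 = Q * (α-β)^2 := by
    rw [hA0, hB0, hQ]
    linear_combination h1sq - h2sq + hrat
  have hQ0 : 0 ≤ Q := by rw [hQ]; positivity
  have hnv : wnorm N w v = |α - β| * Real.sqrt Q := by
    rw [wnorm, hvv, hAB, mul_comm Q ((α-β)^2), Real.sqrt_mul (sq_nonneg _),
        Real.sqrt_sq_eq_abs]
  have hvε3 : winner N w v ε = winner N w μvec (psiContrast w s e τ)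
        * winner N w ε (psiContrast w s e τ)
      - winner N w μvec (psiContrast w s e b) * winner N w ε (psiContrast w s e b) := by
    rw [winner_sub_smul N w (psiContrast w s e τ) (psiContrast w s e b) ε v _ _ hv',
        winner_comm N w (psiContrast w s e τ) ε, winner_comm N w (psiContrast w s e b) ε]
  rw [hnv, hvε3] at hvε
  have hvεbd := abs_le.mp hvε
  have hEb := abs_le.mp hεb
  have hr0 : 0 ≤ r := (abs_nonneg _).trans hεb
  have hYτ : winner N w Y (psiContrast w s e τ)
      = winner N w μvec (psiContrast w s e τ) + winner N w ε (psiContrast w s e τ) :=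
    winner_add_left N w μvec ε Y _ hY
  have hYb : winner N w Y (psiContrast w s e b)
      = winner N w μvec (psiContrast w s e b) + winner N w ε (psiContrast w s e b) :=
    winner_add_left N w μvec ε Y _ hY
  rw [wCUSUM_sq N w Y hw s e τ hs hsτ hτe heN, wCUSUM_sq N w Y hw s e b hs hsb hbe heN,
      hYτ, hYb, sq_abs]
  have hEb2 : (winner N w ε (psiContrast w s e b))^2 ≤ r^2 := sq_le_sq' hEb.1 hEb.2
  have hEτ2 : (0:ℝ) ≤ (winner N w ε (psiContrast w s e τ))^2 := sq_nonneg _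
  have expand : ∀ a b c d : ℝ,
      (a + c)^2 - (b + d)^2 = (a^2 - b^2) + 2*(a*c - b*d) + c^2 - d^2 := by
    intros; ring
  rw [expand]
  linarith [hAB, hvεbd.1, hEb2, hEτ2]
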